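/- arXiv:2104.00992 — 2 statements merged into one kernel-verified Lean document; each statement's English description precedes it below -/
import Mathlib

section
/- Let p > 0 and k > 1 be real numbers and let f(t) = Σ_{n=1}^∞ n^{−k} cos((1 − n^{−p}) t). Then the series U(t) = Σ_{n=1}^∞ (n^{2p}/(2n^{p+k} − n^k)) · (cos((1 − n^{−p}) t) − cos t) converges for every real t (uniformly on compact subsets of ℝ), the function U is twice continuously differentiable, and U solves the Cauchy problem U''(t) + U(t) = f(t) for all t with U(0) = 0 and U'(0) = 0. -/
open Real Filter

/-!
Each term `a (cos (ω t) - cos t)` with `a = n^{2p} / (2 n^{p+k} - n^k)`, `ω = 1 - n^{-p}` is the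
solution of `u'' + u = a (1 - ω²) cos (ω t) = n^{-k} cos (ω t)` with zero initial data. The term
and its first two derivatives are bounded by `2 a (1 - ω) (1 + |t|) ≤ 2 n^{-k} (1 + |t|)`, since
`|cos (ω t) - cos t| ≤ (1 - ω) |t|` and similarly for `sin`. As `k > 1` these bounds are summable
locally uniformly in `t`, so the series may be differentiated twice termwise.
-/

section LinearGrowth

variable {E : Type*} [NormedAddCommGroup E] [CompleteSpace E]
  {f f' : ℕ → ℝ → E} {b : ℕ → ℝ}

lemma summable_of_norm_le_mul_one_add_abs (hb : Summable b)
    (hf : ∀ n t, ‖f n t‖ ≤ b n * (1 + |t|)) (t : ℝ) : Summable (f · t) :=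
  .of_norm_bounded (hb.mul_right _) fun n => hf n t

lemma tendstoLocallyUniformly_tsum_of_norm_le_mul_one_add_abs (hb : Summable b)
    (hf : ∀ n t, ‖f n t‖ ≤ b n * (1 + |t|)) :
    TendstoLocallyUniformly (fun N t => ∑ n ∈ Finset.range N, f n t) (fun t => ∑' n, f n t)
      atTop := by
  rw [tendstoLocallyUniformly_iff_forall_isCompact]
  intro s hs
  obtain ⟨r, hr⟩ := hs.isBounded.subset_closedBall (0 : ℝ)
  refine tendstoUniformlyOn_tsum_nat (hb.mul_right (1 + r)) fun n t ht => (hf n t).trans ?_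
  have hbn : 0 ≤ b n := (norm_nonneg _).trans (by simpa using hf n 0)
  have htr : |t| ≤ r := by simpa using hr ht
  gcongr

lemma hasDerivAt_tsum_of_norm_le_mul_one_add_abs [NormedSpace ℝ E] (hb : Summable b)
    (hf : ∀ n t, HasDerivAt (f n) (f' n t) t) (hf' : ∀ n t, ‖f' n t‖ ≤ b n * (1 + |t|))
    (hf₀ : Summable (f · 0)) (t : ℝ) :
    HasDerivAt (fun t => ∑' n, f n t) (∑' n, f' n t) t := by
  have hr : 0 < |t| + 1 := by positivity
  refine hasDerivAt_tsum_of_isPreconnected (hb.mul_right (1 + (|t| + 1))) Metric.isOpen_ball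
    (convex_ball 0 _).isPreconnected (fun n s _ => hf n s) (fun n s hs => (hf' n s).trans ?_)
    (Metric.mem_ball_self hr) hf₀ (by simp)
  have hbn : 0 ≤ b n := (norm_nonneg _).trans (by simpa using hf' n 0)
  have hsr : |s| ≤ |t| + 1 := by simpa using (Metric.mem_ball.1 hs).le
  gcongr

end LinearGrowth

section Beat

lemma hasDerivAt_cos_mul_sub_cos (ω t : ℝ) :
    HasDerivAt (fun t => cos (ω * t) - cos t) (sin t - ω * sin (ω * t)) t := by
  have h := (((hasDerivAt_id t).const_mul ω).cos).sub (hasDerivAt_cos t)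
  simp only [id, mul_one] at h
  exact h.congr_deriv (by ring)

lemma hasDerivAt_sin_sub_mul_sin (ω t : ℝ) :
    HasDerivAt (fun t => sin t - ω * sin (ω * t)) (cos t - ω ^ 2 * cos (ω * t)) t := by
  have h := (hasDerivAt_sin t).sub ((((hasDerivAt_id t).const_mul ω).sin).const_mul ω)
  simp only [id, mul_one] at h
  exact h.congr_deriv (by ring)

variable {ω : ℝ}

lemma abs_sub_mul_self (hω : ω ≤ 1) (t : ℝ) : |t - ω * t| = (1 - ω) * |t| := by
  rw [← one_sub_mul, abs_mul, abs_of_nonneg (sub_nonneg.2 hω)]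

lemma abs_cos_mul_sub_cos_le (hω : ω ≤ 1) (t : ℝ) :
    |cos (ω * t) - cos t| ≤ 2 * (1 - ω) * (1 + |t|) := by
  have h := abs_cos_sub_cos_le t (ω * t)
  rw [abs_sub_mul_self hω, abs_sub_comm] at h
  nlinarith [abs_nonneg t]

lemma abs_sin_sub_mul_sin_le (hω : ω ≤ 1) (t : ℝ) :
    |sin t - ω * sin (ω * t)| ≤ 2 * (1 - ω) * (1 + |t|) := by
  have h := abs_sin_sub_sin_le t (ω * t)
  rw [abs_sub_mul_self hω] at h
  have hω' : 0 ≤ 1 - ω := sub_nonneg.2 hω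
  calc |sin t - ω * sin (ω * t)| = |(sin t - sin (ω * t)) + (1 - ω) * sin (ω * t)| := by ring_nf
    _ ≤ (1 - ω) * |t| + (1 - ω) * 1 := by
      grw [abs_add_le, h, abs_mul, abs_of_nonneg hω', abs_sin_le_one (ω * t)]
    _ ≤ 2 * (1 - ω) * (1 + |t|) := by nlinarith [abs_nonneg t]

lemma abs_cos_sub_sq_mul_cos_le (hω₀ : 0 ≤ ω) (hω : ω ≤ 1) (t : ℝ) :
    |cos t - ω ^ 2 * cos (ω * t)| ≤ 2 * (1 - ω) * (1 + |t|) := by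
  have h := abs_cos_sub_cos_le t (ω * t)
  rw [abs_sub_mul_self hω] at h
  have hω2 : 0 ≤ 1 - ω ^ 2 := by nlinarith
  calc |cos t - ω ^ 2 * cos (ω * t)| = |(cos t - cos (ω * t)) + (1 - ω ^ 2) * cos (ω * t)| := by
        ring_nf
    _ ≤ (1 - ω) * |t| + (1 - ω ^ 2) * 1 := by
      grw [abs_add_le, h, abs_mul, abs_of_nonneg hω2, abs_cos_le_one (ω * t)]
    _ ≤ 2 * (1 - ω) * (1 + |t|) := by nlinarith [abs_nonneg t]

end Beat

lemma norm_mul_le_of_abs_le {a ω b x t : ℝ} (ha : 0 ≤ a) (hab : a * (1 - ω) ≤ b)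
    (hx : |x| ≤ 2 * (1 - ω) * (1 + |t|)) : ‖a * x‖ ≤ 2 * b * (1 + |t|) := by
  rw [Real.norm_eq_abs, abs_mul, abs_of_nonneg ha]
  have := mul_le_mul_of_nonneg_left hx ha
  nlinarith [abs_nonneg t]

section BeatSeries

variable {a ω b : ℕ → ℝ} (ha : ∀ n, 0 ≤ a n) (hω : ∀ n, ω n ≤ 1)
  (hab : ∀ n, a n * (1 - ω n) ≤ b n) (hb : Summable b)
include ha hω hab hb

lemma summable_beats (t : ℝ) : Summable fun n => a n * (cos (ω n * t) - cos t) :=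
  summable_of_norm_le_mul_one_add_abs (hb.mul_left 2)
    (fun n t => norm_mul_le_of_abs_le (ha n) (hab n) (abs_cos_mul_sub_cos_le (hω n) t)) t

lemma tendstoLocallyUniformly_beats :
    TendstoLocallyUniformly (fun N t => ∑ n ∈ Finset.range N, a n * (cos (ω n * t) - cos t))
      (fun t => ∑' n, a n * (cos (ω n * t) - cos t)) atTop :=
  tendstoLocallyUniformly_tsum_of_norm_le_mul_one_add_abs (hb.mul_left 2)
    fun n t => norm_mul_le_of_abs_le (ha n) (hab n) (abs_cos_mul_sub_cos_le (hω n) t)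

lemma hasDerivAt_beats (t : ℝ) :
    HasDerivAt (fun t => ∑' n, a n * (cos (ω n * t) - cos t))
      (∑' n, a n * (sin t - ω n * sin (ω n * t))) t :=
  hasDerivAt_tsum_of_norm_le_mul_one_add_abs (hb.mul_left 2)
    (fun n t => (hasDerivAt_cos_mul_sub_cos (ω n) t).const_mul (a n))
    (fun n t => norm_mul_le_of_abs_le (ha n) (hab n) (abs_sin_sub_mul_sin_le (hω n) t))
    (summable_beats ha hω hab hb 0) t

variable (hω₀ : ∀ n, 0 ≤ ω n)
include hω₀

lemma hasDerivAt_beats_deriv (t : ℝ) :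
    HasDerivAt (fun t => ∑' n, a n * (sin t - ω n * sin (ω n * t)))
      (∑' n, a n * (cos t - ω n ^ 2 * cos (ω n * t))) t :=
  hasDerivAt_tsum_of_norm_le_mul_one_add_abs (hb.mul_left 2)
    (fun n t => (hasDerivAt_sin_sub_mul_sin (ω n) t).const_mul (a n))
    (fun n t => norm_mul_le_of_abs_le (ha n) (hab n) (abs_cos_sub_sq_mul_cos_le (hω₀ n) (hω n) t))
    (summable_of_norm_le_mul_one_add_abs (hb.mul_left 2)
      (fun n t => norm_mul_le_of_abs_le (ha n) (hab n) (abs_sin_sub_mul_sin_le (hω n) t)) 0) t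

lemma continuous_beats_deriv_deriv :
    Continuous fun t => ∑' n, a n * (cos t - ω n ^ 2 * cos (ω n * t)) := by
  refine (tendstoLocallyUniformly_tsum_of_norm_le_mul_one_add_abs (hb.mul_left 2)
    fun n t => norm_mul_le_of_abs_le (ha n) (hab n)
      (abs_cos_sub_sq_mul_cos_le (hω₀ n) (hω n) t)).continuous (.of_forall fun N => ?_)
  fun_prop

lemma contDiff_two_beats : ContDiff ℝ 2 fun t => ∑' n, a n * (cos (ω n * t) - cos t) := by
  rw [show (2 : WithTop ℕ∞) = 1 + 1 from rfl, contDiff_succ_iff_deriv,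
    funext fun t => (hasDerivAt_beats ha hω hab hb t).deriv, contDiff_one_iff_deriv,
    funext fun t => (hasDerivAt_beats_deriv ha hω hab hb hω₀ t).deriv]
  exact ⟨fun t => (hasDerivAt_beats ha hω hab hb t).differentiableAt, by simp,
    fun t => (hasDerivAt_beats_deriv ha hω hab hb hω₀ t).differentiableAt,
    continuous_beats_deriv_deriv ha hω hab hb hω₀⟩

lemma deriv_deriv_beats_add_beats (t : ℝ) :
    deriv (deriv fun t => ∑' n, a n * (cos (ω n * t) - cos t)) t
      + ∑' n, a n * (cos (ω n * t) - cos t) = ∑' n, a n * (1 - ω n ^ 2) * cos (ω n * t) := by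
  rw [funext fun t => (hasDerivAt_beats ha hω hab hb t).deriv,
    (hasDerivAt_beats_deriv ha hω hab hb hω₀ t).deriv, ← Summable.tsum_add]
  · exact tsum_congr fun n => by ring
  · exact summable_of_norm_le_mul_one_add_abs (hb.mul_left 2)
      (fun n t => norm_mul_le_of_abs_le (ha n) (hab n)
        (abs_cos_sub_sq_mul_cos_le (hω₀ n) (hω n) t)) t
  · exact summable_beats ha hω hab hb t

end BeatSeries

section Amplitude

variable {x p : ℝ} (k : ℝ)

lemma rpow_two_mul_div_eq (hx : 0 < x) :
    x ^ (2 * p) / (2 * x ^ (p + k) - x ^ k) = (x ^ p) ^ 2 / (x ^ k * (2 * x ^ p - 1)) := by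
  rw [two_mul, rpow_add hx, rpow_add hx]
  ring

lemma rpow_two_mul_div_nonneg (hx : 1 ≤ x) (hp : 0 ≤ p) :
    0 ≤ x ^ (2 * p) / (2 * x ^ (p + k) - x ^ k) := by
  have hA := one_le_rpow hx hp
  rw [rpow_two_mul_div_eq k (by linarith)]
  have := rpow_pos_of_pos (by linarith : 0 < x) k
  have : 0 < 2 * x ^ p - 1 := by linarith
  positivity

lemma rpow_two_mul_div_mul_rpow_neg_le (hx : 1 ≤ x) (hp : 0 ≤ p) :
    x ^ (2 * p) / (2 * x ^ (p + k) - x ^ k) * (1 - (1 - x ^ (-p))) ≤ x ^ (-k) := by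
  have hA := one_le_rpow hx hp
  have hK := rpow_pos_of_pos (by linarith : 0 < x) k
  rw [sub_sub_cancel, rpow_two_mul_div_eq k (by linarith), rpow_neg (by linarith),
    rpow_neg (by linarith), div_mul_eq_mul_div, div_le_iff₀ (by nlinarith)]
  field_simp
  nlinarith

lemma rpow_two_mul_div_mul_one_sub_sq (hx : 1 ≤ x) (hp : 0 ≤ p) :
    x ^ (2 * p) / (2 * x ^ (p + k) - x ^ k) * (1 - (1 - x ^ (-p)) ^ 2) = x ^ (-k) := by
  have hA := one_le_rpow hx hp
  have hK := rpow_pos_of_pos (by linarith : 0 < x) k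
  have h2A : x ^ p * 2 - 1 ≠ 0 := by linarith
  have hsq : 1 - (1 - (x ^ p)⁻¹) ^ 2 = (2 * x ^ p - 1) / (x ^ p) ^ 2 := by
    field_simp
    ring
  rw [rpow_two_mul_div_eq k (by linarith), rpow_neg (by linarith), rpow_neg (by linarith), hsq]
  field_simp

end Amplitude

/-- For `p > 0`, `k > 1`, the series
`U(t) = Σ_{n=1}^∞ (n^{2p}/(2n^{p+k} − n^k)) (cos((1 − n^{−p}) t) − cos t)`
converges for every `t` (uniformly on compact subsets of `ℝ`), is twice continuously
differentiable, and solves the Cauchy problem `U'' + U = f`, `U(0) = 0`, `U'(0) = 0`,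
where `f(t) = Σ_{n=1}^∞ n^{−k} cos((1 − n^{−p}) t)`. -/
theorem statement2 (p k : ℝ) (hp : 0 < p) (hk : 1 < k)
    (f U : ℝ → ℝ)
    (hf : f = fun t : ℝ => ∑' n : ℕ,
      ((n : ℝ) + 1) ^ (-k) * Real.cos ((1 - ((n : ℝ) + 1) ^ (-p)) * t))
    (hU : U = fun t : ℝ => ∑' n : ℕ,
      (((n : ℝ) + 1) ^ (2 * p) / (2 * ((n : ℝ) + 1) ^ (p + k) - ((n : ℝ) + 1) ^ k)) *
        (Real.cos ((1 - ((n : ℝ) + 1) ^ (-p)) * t) - Real.cos t)) :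
    (∀ t : ℝ, Summable (fun n : ℕ =>
      (((n : ℝ) + 1) ^ (2 * p) / (2 * ((n : ℝ) + 1) ^ (p + k) - ((n : ℝ) + 1) ^ k)) *
        (Real.cos ((1 - ((n : ℝ) + 1) ^ (-p)) * t) - Real.cos t))) ∧
    TendstoLocallyUniformly
      (fun N : ℕ => fun t : ℝ => ∑ n ∈ Finset.range N,
        (((n : ℝ) + 1) ^ (2 * p) / (2 * ((n : ℝ) + 1) ^ (p + k) - ((n : ℝ) + 1) ^ k)) *
          (Real.cos ((1 - ((n : ℝ) + 1) ^ (-p)) * t) - Real.cos t))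
      U atTop ∧
    ContDiff ℝ 2 U ∧
    (∀ t : ℝ, deriv (deriv U) t + U t = f t) ∧
    U 0 = 0 ∧ deriv U 0 = 0 := by
  subst hf hU
  have hx (n : ℕ) : (1 : ℝ) ≤ n + 1 := le_add_of_nonneg_left n.cast_nonneg
  have ha (n : ℕ) := rpow_two_mul_div_nonneg k (hx n) hp.le
  have hω (n : ℕ) : 1 - ((n : ℝ) + 1) ^ (-p) ≤ 1 :=
    sub_le_self _ (rpow_nonneg (by linarith [hx n]) _)
  have hω₀ (n : ℕ) : 0 ≤ 1 - ((n : ℝ) + 1) ^ (-p) :=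
    sub_nonneg.2 (rpow_le_one_of_one_le_of_nonpos (hx n) (neg_nonpos.2 hp.le))
  have hab (n : ℕ) := rpow_two_mul_div_mul_rpow_neg_le k (hx n) hp.le
  have hb : Summable fun n : ℕ => ((n : ℝ) + 1) ^ (-k) := by
    exact_mod_cast (summable_nat_add_iff 1).2 (summable_nat_rpow.2 (by linarith))
  refine ⟨summable_beats ha hω hab hb, tendstoLocallyUniformly_beats ha hω hab hb,
    contDiff_two_beats ha hω hab hb hω₀, fun t => ?_, by simp, ?_⟩
  · rw [deriv_deriv_beats_add_beats ha hω hab hb hω₀ t]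
    exact tsum_congr fun n => by rw [rpow_two_mul_div_mul_one_sub_sq k (hx n) hp.le]
  · simp [(hasDerivAt_beats ha hω hab hb 0).deriv]
end

section
/- Let p > 0 and k > 1 be real numbers. Define R₄(t) = Σ_{n=1}^∞ (2n^{2p}/(2n^{p+k} − n^k)) (cos(t/n^p) − 1) and σ_c(t) = Σ_{n=1}^∞ n^{p−k} sin²(t/(2n^p)). Then there is a constant C such that for all real t, |R₄(t) + 2σ_c(t)| ≤ C; that is, R₄ differs from −2σ_c by a function uniformly bounded on ℝ. -/
open Real

/-- For `p > 0`, `k > 1`, with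
`R₄(t) = Σ_{n=1}^∞ (2n^{2p}/(2n^{p+k} − n^k)) (cos(t/n^p) − 1)` and
`σ_c(t) = Σ_{n=1}^∞ n^{p−k} sin²(t/(2n^p))`, the function `R₄ + 2σ_c` is
uniformly bounded on `ℝ`, i.e. `R₄` differs from `−2σ_c` by a function bounded
uniformly in `t`. -/
theorem statement10 (p k : ℝ) (hp : 0 < p) (hk : 1 < k)
    (R₄ σc : ℝ → ℝ)
    (hR₄ : R₄ = fun t : ℝ => ∑' n : ℕ,
      (2 * ((n : ℝ) + 1) ^ (2 * p) / (2 * ((n : ℝ) + 1) ^ (p + k) - ((n : ℝ) + 1) ^ k)) *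
        (Real.cos (t / ((n : ℝ) + 1) ^ p) - 1))
    (hσc : σc = fun t : ℝ => ∑' n : ℕ,
      ((n : ℝ) + 1) ^ (p - k) * Real.sin (t / (2 * ((n : ℝ) + 1) ^ p)) ^ 2) :
    ∃ C : ℝ, ∀ t : ℝ, |R₄ t + 2 * σc t| ≤ C := by
  set m : ℕ → ℝ := fun n => (n : ℝ) + 1 with hm
  have hm1 : ∀ n, (1 : ℝ) ≤ m n := fun n => by simp [hm]
  have hm0 : ∀ n, (0 : ℝ) < m n := fun n => lt_of_lt_of_le one_pos (hm1 n)
  have hxp : ∀ n, (1 : ℝ) ≤ (m n) ^ p :=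
    fun n => Real.one_le_rpow (hm1 n) hp.le
  have hxp0 : ∀ n, (0 : ℝ) < (m n) ^ p := fun n => lt_of_lt_of_le one_pos (hxp n)
  have hxk0 : ∀ n, (0 : ℝ) < (m n) ^ k := fun n => Real.rpow_pos_of_pos (hm0 n) k
  -- the majorant series
  have hg : Summable (fun n : ℕ => (m n) ^ (-k)) := by
    have h1 : Summable (fun n : ℕ => ((n : ℝ)) ^ (-k)) :=
      Real.summable_nat_rpow.mpr (by linarith)
    have h2 := (summable_nat_add_iff (f := fun n : ℕ => ((n : ℝ)) ^ (-k)) 1).mpr h1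
    refine h2.congr fun n => ?_
    simp [hm]
  refine ⟨∑' n : ℕ, 2 * (m n) ^ (-k), fun t => ?_⟩
  set a : ℕ → ℝ := fun n =>
    (2 * (m n) ^ (2 * p) / (2 * (m n) ^ (p + k) - (m n) ^ k)) *
      (Real.cos (t / (m n) ^ p) - 1) with ha_def
  set b : ℕ → ℝ := fun n => (m n) ^ (p - k) * Real.sin (t / (2 * (m n) ^ p)) ^ 2 with hb_def
  set c : ℕ → ℝ := fun n =>
    -2 * ((m n) ^ p / (m n) ^ k) / (2 * (m n) ^ p - 1) *
      Real.sin (t / (2 * (m n) ^ p)) ^ 2 with hc_def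
  -- pointwise identity : a n + 2 * b n = c n
  have key : ∀ n, a n + 2 * b n = c n := by
    intro n
    set x := (m n) ^ p with hx_def
    set y := (m n) ^ k with hy_def
    have hx1 : (1 : ℝ) ≤ x := hxp n
    have hx0 : (0 : ℝ) < x := hxp0 n
    have hy0 : (0 : ℝ) < y := hxk0 n
    have h2x : (0 : ℝ) < 2 * x - 1 := by linarith
    have e2p : (m n) ^ (2 * p) = x ^ 2 := by
      rw [two_mul, Real.rpow_add (hm0 n), hx_def, sq]
    have epk : (m n) ^ (p + k) = x * y := by
      rw [Real.rpow_add (hm0 n)]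
    have epmk : (m n) ^ (p - k) = x / y := by
      rw [Real.rpow_sub (hm0 n)]
    have hcos : Real.cos (t / x) - 1 = -2 * Real.sin (t / (2 * x)) ^ 2 := by
      have hu : 2 * (t / (2 * x)) = t / x := by
        field_simp
      have := Real.sin_sq_eq_half_sub (t / (2 * x))
      rw [hu] at this
      linarith
    simp only [ha_def, hb_def, hc_def, e2p, epk, epmk, ← hx_def, ← hy_def, hcos]
    set s := Real.sin (t / (2 * x)) ^ 2
    have hden : 2 * (x * y) - y = y * (2 * x - 1) := by ring
    rw [hden]
    have hy' : y ≠ 0 := hy0.ne'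
    have h2x' : 2 * x - 1 ≠ 0 := h2x.ne'
    field_simp
    ring
  -- summability of b
  have hb_nonneg : ∀ n, 0 ≤ b n := fun n => by
    have := (hxk0 n).le
    positivity
  have hb_le : ∀ n, b n ≤ t ^ 2 / 4 * (m n) ^ (-k) := by
    intro n
    have hs : Real.sin (t / (2 * (m n) ^ p)) ^ 2 ≤ (t / (2 * (m n) ^ p)) ^ 2 :=
      Real.sin_sq_le_sq
    have h1 : b n ≤ (m n) ^ (p - k) * (t / (2 * (m n) ^ p)) ^ 2 := by
      have hpk : (0 : ℝ) < (m n) ^ (p - k) := Real.rpow_pos_of_pos (hm0 n) _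
      exact mul_le_mul_of_nonneg_left hs hpk.le
    have e1 : (m n) ^ (p - k) * (t / (2 * (m n) ^ p)) ^ 2
        = t ^ 2 / 4 * ((m n) ^ (p - k) / ((m n) ^ p) ^ 2) := by
      field_simp
      ring
    have e2 : (m n) ^ (p - k) / ((m n) ^ p) ^ 2 = (m n) ^ (-(p + k)) := by
      rw [← Real.rpow_natCast ((m n) ^ p) 2, ← Real.rpow_mul (hm0 n).le,
        ← Real.rpow_sub (hm0 n)]
      norm_num
      ring_nf
    have e3 : (m n) ^ (-(p + k)) ≤ (m n) ^ (-k) :=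
      Real.rpow_le_rpow_of_exponent_le (hm1 n) (by linarith)
    calc b n ≤ t ^ 2 / 4 * ((m n) ^ (-(p + k))) := by rw [← e2, ← e1]; exact h1
      _ ≤ t ^ 2 / 4 * (m n) ^ (-k) := by
          apply mul_le_mul_of_nonneg_left e3; positivity
  have hb_sum : Summable b :=
    Summable.of_nonneg_of_le hb_nonneg hb_le (hg.mul_left _)
  -- bound on |c|
  have hc_abs_le : ∀ n, |c n| ≤ 2 * (m n) ^ (-k) := by
    intro n
    have hx1 : (1 : ℝ) ≤ (m n) ^ p := hxp n
    have hx0 : (0 : ℝ) < (m n) ^ p := hxp0 n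
    have hy0 : (0 : ℝ) < (m n) ^ k := hxk0 n
    have h2x : (0 : ℝ) < 2 * (m n) ^ p - 1 := by linarith
    have hs0 : (0 : ℝ) ≤ Real.sin (t / (2 * (m n) ^ p)) ^ 2 := sq_nonneg _
    have hs1 : Real.sin (t / (2 * (m n) ^ p)) ^ 2 ≤ 1 := Real.sin_sq_le_one _
    have habs : |c n| = 2 * ((m n) ^ p / (m n) ^ k) / (2 * (m n) ^ p - 1) *
        Real.sin (t / (2 * (m n) ^ p)) ^ 2 := by
      rw [hc_def]
      rw [abs_mul, abs_div, abs_mul]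
      rw [abs_of_pos (by positivity : (0:ℝ) < (m n) ^ p / (m n) ^ k),
        abs_of_pos h2x, abs_of_nonneg hs0]
      norm_num
    rw [habs]
    have h1 : 2 * ((m n) ^ p / (m n) ^ k) / (2 * (m n) ^ p - 1) *
        Real.sin (t / (2 * (m n) ^ p)) ^ 2
        ≤ 2 * ((m n) ^ p / (m n) ^ k) / (2 * (m n) ^ p - 1) * 1 := by
      apply mul_le_mul_of_nonneg_left hs1; positivity
    refine h1.trans ?_
    rw [mul_one, Real.rpow_neg (hm0 n).le]
    have e : (2:ℝ) * ((m n) ^ k)⁻¹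
        = 2 * ((2 * (m n) ^ p - 1) / (m n) ^ k) / (2 * (m n) ^ p - 1) := by
      field_simp
    rw [e]
    gcongr <;> linarith
  -- summability of c
  have hc_abs_sum : Summable (fun n => |c n|) :=
    Summable.of_nonneg_of_le (fun n => abs_nonneg _) hc_abs_le (hg.mul_left 2)
  have hc_sum : Summable c := hc_abs_sum.of_abs
  -- summability of a
  have ha_sum : Summable a := by
    have : a = fun n => c n - 2 * b n := funext fun n => by linarith [key n]
    rw [this]
    exact hc_sum.sub (hb_sum.mul_left 2)
  -- combine the tsums
  have hsum_eq : R₄ t + 2 * σc t = ∑' n, c n := by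
    rw [hR₄, hσc]
    simp only [hm]
    rw [← tsum_mul_left]
    rw [← Summable.tsum_add ha_sum (hb_sum.mul_left 2)]
    exact tsum_congr fun n => by simpa using key n
  rw [hsum_eq]
  have h1 : |∑' n, c n| ≤ ∑' n, |c n| := by
    have h2 : Summable fun n => ‖c n‖ := by
      simpa [Real.norm_eq_abs] using hc_abs_sum
    have := norm_tsum_le_tsum_norm h2
    simpa [Real.norm_eq_abs] using this
  exact h1.trans (Summable.tsum_le_tsum hc_abs_le hc_abs_sum (hg.mul_left 2))
end
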